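/- arXiv:2210.03851 — 7 statements merged into one kernel-verified Lean document; each statement's English description precedes it below -/
import Mathlib

section
/- In a commutative semiring (D, +, ×, 0, 1), for annotated relations R over schema S_R and T over schema S_T, and any attribute A ∈ S_R with A ∉ S_T, marginalization distributes over join: Σ_A (R ⋈ T) = (Σ_A R) ⋈ T, where (R ⋈ T)(t) = R(π_{S_R}(t)) × T(π_{S_T}(t)) and (Σ_A R)(t) = Σ {R(t₁) : π_{S_R∖{A}}(t₁) = t}. -/
open Finset

variable {Att : Type*} [Fintype Att] [DecidableEq Att]
variable {Val : Att → Type*} [∀ a, Fintype (Val a)] [∀ a, DecidableEq (Val a)]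
variable {D : Type*} [CommSemiring D]

/-- `R` depends only on the attributes in schema `S`. -/
def DependsOnlyOn (R : (∀ a, Val a) → D) (S : Finset Att) : Prop :=
  ∀ t₁ t₂ : ∀ a, Val a, (∀ a ∈ S, t₁ a = t₂ a) → R t₁ = R t₂

/-- Join of annotated relations: multiply the annotations. -/
def joinRel (R T : (∀ a, Val a) → D) : (∀ a, Val a) → D := fun t => R t * T t

/-- Marginalize out a single attribute `A`: sum over all values of `A`. -/
def marg (A : Att) (R : (∀ a, Val a) → D) : (∀ a, Val a) → D :=
  fun t => ∑ v : Val A, R (Function.update t A v)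

/-- Marginalize out all attributes in `E`. -/
def margOver (E : Finset Att) (R : (∀ a, Val a) → D) : (∀ a, Val a) → D :=
  fun t => ∑ s : ∀ a, Val a, if ∀ a, a ∉ E → s a = t a then R s else 0

/-- Selection on attribute `A`: zero out annotations of tuples failing `p`. -/
def select (A : Att) (p : Val A → Prop) [DecidablePred p] (R : (∀ a, Val a) → D) :
    (∀ a, Val a) → D :=
  fun t => if p (t A) then R t else 0

theorem DependsOnlyOn.apply_update_of_notMem {ι : Type*} [DecidableEq ι] {β : ι → Type*}
    {M : Type*} {T : (∀ i, β i) → M} {S : Finset ι} (hT : DependsOnlyOn T S) {A : ι} (hA : A ∉ S)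
    (t : ∀ i, β i) (v : β A) :
    T (Function.update t A v) = T t :=
  hT _ _ fun _ hi => Function.update_of_ne (ne_of_mem_of_not_mem hi hA) _ _

theorem marg_joinRel_of_forall_update_eq {ι : Type*} [DecidableEq ι] {β : ι → Type*}
    [∀ i, Fintype (β i)] {M : Type*} [CommSemiring M] (R T : (∀ i, β i) → M) (A : ι)
    (hT : ∀ t (v : β A), T (Function.update t A v) = T t) :
    marg A (joinRel R T) = joinRel (marg A R) T := by
  funext t
  simp only [marg, joinRel, hT, Finset.sum_mul]

theorem marg_join_pushdown_general (R T : (∀ a, Val a) → D) (ST : Finset Att)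
    (hT : DependsOnlyOn T ST)
    (A : Att) (hA' : A ∉ ST) :
    marg A (joinRel R T) = joinRel (marg A R) T :=
  marg_joinRel_of_forall_update_eq R T A (hT.apply_update_of_notMem hA')

/-- Marginalization over an attribute `A` of `R`'s schema that does not occur in
`T`'s schema distributes over the join: `Σ_A (R ⋈ T) = (Σ_A R) ⋈ T`. -/
theorem marg_join_pushdown (R T : (∀ a, Val a) → D) (SR ST : Finset Att)
    (hR : DependsOnlyOn R SR) (hT : DependsOnlyOn T ST)
    (A : Att) (hA : A ∈ SR) (hA' : A ∉ ST) :
    marg A (joinRel R T) = joinRel (marg A R) T :=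
  marg_join_pushdown_general R T ST hT A hA'
end

section
/- Given annotated relations R₁, …, Rₙ over a commutative semiring and a set of attributes S' contained in the union of their schemas, the aggregation Σ over all attributes not in S' applied to the full join R₁ ⋈ ⋯ ⋈ Rₙ equals the result computed by any variable elimination order: for each eliminated attribute A, one may first join only the relations whose schema contains A, marginalize out A, and replace them by the result, and the final result is independent of the elimination order. -/
/-!
Relations whose schema avoids `A` are constant in `A`, so by distributivity they factor out of
the sum over the values of `A`: one elimination step therefore replaces the join of all current
relations by its marginalization over `A`. Eliminating along any order thus computes iterated
single-attribute marginalization of the full join, and such marginalizations commute.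
-/

open Finset

variable {Att : Type*} [Fintype Att] [DecidableEq Att]
variable {Val : Att → Type*} [∀ a, Fintype (Val a)] [∀ a, DecidableEq (Val a)]
variable {D : Type*} [CommSemiring D]

/-- Join a list of annotated relations. -/
def joinList (rs : List ((∀ a, Val a) → D)) : (∀ a, Val a) → D :=
  fun t => (rs.map (fun R => R t)).prod

/-- One variable-elimination step: the relations (with schemas) whose schema
contains `A` are clustered, joined, and `A` is marginalized out of the result;
the other relations are kept untouched. -/
def elimStep (A : Att) (rs : List (Finset Att × ((∀ a, Val a) → D))) :
    List (Finset Att × ((∀ a, Val a) → D)) :=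
  rs.filter (fun p : Finset Att × ((∀ a, Val a) → D) => decide (A ∉ p.1)) ++
    [(((rs.filter (fun p : Finset Att × ((∀ a, Val a) → D) => decide (A ∈ p.1))).foldr (fun (p : Finset Att × ((∀ a, Val a) → D)) s => p.1 ∪ s) ∅).erase A,
      marg A (joinList ((rs.filter (fun p : Finset Att × ((∀ a, Val a) → D) => decide (A ∈ p.1))).map Prod.snd)))]

omit [Fintype Att] [DecidableEq Att] [∀ a, Fintype (Val a)] [∀ a, DecidableEq (Val a)]
  [CommSemiring D] in
theorem DependsOnlyOn.mono {R : (∀ a, Val a) → D} {S T : Finset Att}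
    (hR : DependsOnlyOn R S) (hST : S ⊆ T) : DependsOnlyOn R T :=
  fun t₁ t₂ h => hR t₁ t₂ fun a ha => h a (hST ha)

omit [Fintype Att] [∀ a, Fintype (Val a)] [∀ a, DecidableEq (Val a)] [CommSemiring D] in
theorem DependsOnlyOn.apply_update_of_notMem_s4 {R : (∀ a, Val a) → D} {S : Finset Att} {A : Att}
    (hR : DependsOnlyOn R S) (hA : A ∉ S) (t : ∀ a, Val a) (v : Val A) :
    R (Function.update t A v) = R t :=
  hR _ _ fun _ ha => Function.update_of_ne (ne_of_mem_of_not_mem ha hA) _ _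

omit [Fintype Att] [∀ a, DecidableEq (Val a)] in
theorem DependsOnlyOn.marg {R : (∀ a, Val a) → D} {S : Finset Att}
    (hR : DependsOnlyOn R S) (A : Att) : DependsOnlyOn (marg A R) (S.erase A) := by
  intro t₁ t₂ h
  refine Finset.sum_congr rfl fun v _ => hR _ _ fun a ha => ?_
  rcases eq_or_ne a A with rfl | haA
  · simp
  · simp only [Function.update_of_ne haA]
    exact h a (mem_erase.2 ⟨haA, ha⟩)

omit [Fintype Att] [DecidableEq Att] [∀ a, Fintype (Val a)] [∀ a, DecidableEq (Val a)] in
theorem dependsOnlyOn_joinList {rs : List ((∀ a, Val a) → D)} {S : Finset Att}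
    (h : ∀ R ∈ rs, DependsOnlyOn R S) : DependsOnlyOn (joinList rs) S :=
  fun t₁ t₂ ht => congrArg List.prod (List.map_congr_left fun R hR => h R hR t₁ t₂ ht)

omit [Fintype Att] in
theorem subset_foldr_union {α : Type*} {l : List (Finset Att × α)} {p : Finset Att × α}
    (hp : p ∈ l) : p.1 ⊆ l.foldr (fun p s => p.1 ∪ s) ∅ := by
  induction l with
  | nil => simp at hp
  | cons q l ih =>
    rcases List.mem_cons.1 hp with rfl | hp
    · exact subset_union_left
    · exact (ih hp).trans subset_union_right

omit [Fintype Att] [∀ a, Fintype (Val a)] [∀ a, DecidableEq (Val a)] in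
theorem dependsOnlyOn_joinList_schemas {rs : List (Finset Att × ((∀ a, Val a) → D))}
    (h : ∀ p ∈ rs, DependsOnlyOn p.2 p.1) :
    DependsOnlyOn (joinList (rs.map Prod.snd)) (rs.foldr (fun p s => p.1 ∪ s) ∅) :=
  dependsOnlyOn_joinList <| List.forall_mem_map.2 fun p hp =>
    (h p hp).mono (subset_foldr_union hp)

omit [Fintype Att] [∀ a, DecidableEq (Val a)] in
theorem dependsOnlyOn_elimStep (A : Att) {rs : List (Finset Att × ((∀ a, Val a) → D))}
    (h : ∀ p ∈ rs, DependsOnlyOn p.2 p.1) : ∀ p ∈ elimStep A rs, DependsOnlyOn p.2 p.1 := by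
  intro p hp
  rcases List.mem_append.1 hp with hp | hp
  · exact h p (List.mem_of_mem_filter hp)
  · rw [List.mem_singleton.1 hp]
    exact (dependsOnlyOn_joinList_schemas fun q hq => h q (List.mem_of_mem_filter hq)).marg A

omit [Fintype Att] [DecidableEq Att] [∀ a, Fintype (Val a)] [∀ a, DecidableEq (Val a)] in
theorem joinList_append (rs₁ rs₂ : List ((∀ a, Val a) → D)) :
    joinList (rs₁ ++ rs₂) = joinRel (joinList rs₁) (joinList rs₂) :=
  funext fun t => by simp only [joinList, joinRel, List.map_append, List.prod_append]

omit [Fintype Att] [DecidableEq Att] [∀ a, Fintype (Val a)] [∀ a, DecidableEq (Val a)] in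
theorem joinList_singleton (R : (∀ a, Val a) → D) : joinList [R] = R :=
  funext fun t => by simp [joinList]

omit [Fintype Att] [DecidableEq Att] [∀ a, Fintype (Val a)] [∀ a, DecidableEq (Val a)] in
theorem List.Perm.joinList_eq {rs₁ rs₂ : List ((∀ a, Val a) → D)} (h : rs₁.Perm rs₂) :
    joinList rs₁ = joinList rs₂ :=
  funext fun _ => (h.map _).prod_eq

omit [Fintype Att] [∀ a, DecidableEq (Val a)] in
theorem marg_joinRel_of_apply_update {R T : (∀ a, Val a) → D} {A : Att}
    (hR : ∀ t v, R (Function.update t A v) = R t) :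
    marg A (joinRel R T) = joinRel R (marg A T) :=
  funext fun t => by simp only [marg, joinRel, hR, mul_sum]

omit [∀ a, DecidableEq (Val a)] in
theorem joinList_elimStep (A : Att) {rs : List (Finset Att × ((∀ a, Val a) → D))}
    (h : ∀ p ∈ rs, DependsOnlyOn p.2 p.1) :
    joinList ((elimStep A rs).map Prod.snd) = marg A (joinList (rs.map Prod.snd)) := by
  have hsplit : (rs.map Prod.snd).Perm ((rs.filter fun p => A ∉ p.1).map Prod.snd ++
      (rs.filter fun p => A ∈ p.1).map Prod.snd) := by
    rw [← List.map_append]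
    refine (List.Perm.map _ ?_).symm
    simpa only [decide_not, Bool.not_not] using List.filter_append_perm (fun p => A ∉ p.1) rs
  have hkept :
      DependsOnlyOn (joinList ((rs.filter fun p => A ∉ p.1).map Prod.snd)) (univ.erase A) :=
    dependsOnlyOn_joinList <| List.forall_mem_map.2 fun p hp =>
      have hA : A ∉ p.1 := by simpa using List.of_mem_filter hp
      (h p (List.mem_of_mem_filter hp)).mono fun a ha =>
        mem_erase.2 ⟨ne_of_mem_of_not_mem ha hA, mem_univ a⟩
  rw [hsplit.joinList_eq, joinList_append,
    marg_joinRel_of_apply_update (hkept.apply_update_of_notMem_s4 (notMem_erase A univ))]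
  simp only [elimStep, List.map_append, List.map_singleton, joinList_append, joinList_singleton]

omit [∀ a, DecidableEq (Val a)] in
theorem joinList_foldl_elimStep (order : List Att)
    {rs : List (Finset Att × ((∀ a, Val a) → D))}
    (h : ∀ p ∈ rs, DependsOnlyOn p.2 p.1) :
    joinList ((order.foldl (fun l A => elimStep A l) rs).map Prod.snd) =
      order.foldl (fun R A => marg A R) (joinList (rs.map Prod.snd)) := by
  induction order generalizing rs with
  | nil => rfl
  | cons A order ih =>
    rw [List.foldl_cons, List.foldl_cons, ih (dependsOnlyOn_elimStep A h), joinList_elimStep A h]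

omit [Fintype Att] [∀ a, DecidableEq (Val a)] in
theorem marg_comm (A B : Att) (R : (∀ a, Val a) → D) :
    marg A (marg B R) = marg B (marg A R) := by
  rcases eq_or_ne A B with rfl | hAB
  · rfl
  funext t
  simp only [marg]
  rw [Finset.sum_comm]
  simp only [Function.update_comm hAB]

theorem variable_elimination_order_independence_general
    (rs : List (Finset Att × ((∀ a, Val a) → D)))
    (hdep : ∀ p ∈ rs, DependsOnlyOn p.2 p.1)
    (order₁ order₂ : List Att)
    (hperm : order₁.Perm order₂) :
    joinList ((order₁.foldl (fun l A => elimStep A l) rs).map Prod.snd) =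
      order₂.foldl (fun R A => marg A R) (joinList (rs.map Prod.snd)) := by
  rw [joinList_foldl_elimStep order₁ hdep]
  exact hperm.foldl_eq' (fun A _ B _ R => marg_comm B A R) _

/-- Variable-elimination correctness and order independence: for any order
`order₁` enumerating (without repetition) exactly the attributes of the join
graph that are not in `S'`, performing the elimination steps in that order and
joining the resulting relations gives the marginalization of the full join
`R₁ ⋈ ⋯ ⋈ Rₙ` over all attributes outside `S'` (computed in any order
`order₂`); in particular the result is independent of the elimination order. -/
theorem variable_elimination_order_independence
    (rs : List (Finset Att × ((∀ a, Val a) → D)))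
    (hdep : ∀ p ∈ rs, DependsOnlyOn p.2 p.1)
    (S' : Finset Att)
    (hS' : S' ⊆ rs.foldr (fun p s => p.1 ∪ s) ∅)
    (order₁ order₂ : List Att)
    (hperm : order₁.Perm order₂)
    (hnodup : order₁.Nodup)
    (hmem : ∀ A : Att,
      A ∈ order₁ ↔ (A ∈ rs.foldr (fun p s => p.1 ∪ s) ∅ ∧ A ∉ S')) :
    joinList ((order₁.foldl (fun l A => elimStep A l) rs).map Prod.snd) =
      order₂.foldl (fun R A => marg A R) (joinList (rs.map Prod.snd)) :=
  variable_elimination_order_independence_general rs hdep order₁ order₂ hperm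
end

section
/- Running intersection via message passing (root independence): in a junction tree over a commutative semiring, the message along a directed edge u → v (defined recursively as the marginalization onto the shared attributes of u and v of the join of u's local relations with all incoming messages from u's neighbors other than v) depends only on the subtree rooted at u away from v, and in particular is identical regardless of which bag of the tree is chosen as the root or in which order other messages are computed. -/
open Finset

variable {Att : Type*} [Fintype Att] [DecidableEq Att]
variable {Val : Att → Type*} [∀ a, Fintype (Val a)] [∀ a, DecidableEq (Val a)]
variable {D : Type*} [CommSemiring D]

variable {V : Type*} [Fintype V] [DecidableEq V]

/-- `w` lies in the subtree rooted at `u` away from `v`: there is a walk from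
`w` to `u` that avoids `v`. -/
def InSubtree (G : SimpleGraph V) (u v w : V) : Prop :=
  ∃ p : G.Walk w u, v ∉ p.support

/-- The running intersection property: if an attribute belongs to two bags then
it belongs to every bag on the path between them. -/
def RunningIntersection (G : SimpleGraph V) (bag : V → Finset Att) : Prop :=
  ∀ (a : Att) (u v : V) (p : G.Walk u v), p.IsPath →
    a ∈ bag u → a ∈ bag v → ∀ w ∈ p.support, a ∈ bag w

/-- `M` is a message system for the junction tree `(G, bag)` with local
relations `L`: the message `u → v` marginalizes, onto the attributes shared by
`u` and `v`, the join of `u`'s local relation with all incoming messages from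
`u`'s neighbors other than `v`. -/
def MsgSystem (G : SimpleGraph V) [DecidableRel G.Adj] (bag : V → Finset Att)
    (L : V → (∀ a, Val a) → D) (M : V → V → (∀ a, Val a) → D) : Prop :=
  ∀ u v, G.Adj u v →
    M u v = margOver (bag u \ bag v)
      (fun t => L u t * ∏ w ∈ (G.neighborFinset u).erase v, M w u t)

/-- Absorption at a bag: join of its local relation with all incoming messages. -/
def absorb (G : SimpleGraph V) [DecidableRel G.Adj]
    (L : V → (∀ a, Val a) → D) (M : V → V → (∀ a, Val a) → D) (v : V) :
    (∀ a, Val a) → D :=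
  fun t => L v t * ∏ w ∈ G.neighborFinset v, M w v t

/-! On a tree, the defining equations of a message system determine each message by recursion
on the subtree it summarizes: the message `u → v` is built from `u`'s local relation and the
messages `w → u` for the other neighbors `w` of `u`, and each subtree at such a `w` (away from
`u`) is a proper part of the subtree at `u` away from `v`, since it misses `u`. -/

omit [Fintype V] [DecidableEq V] in
theorem inSubtree_self {G : SimpleGraph V} {u v : V} (huv : G.Adj u v) : InSubtree G u v u :=
  ⟨.nil, by simp [huv.ne']⟩

omit [Fintype V] [DecidableEq V] in
theorem not_inSubtree_right (G : SimpleGraph V) (u v : V) : ¬ InSubtree G u v v :=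
  fun ⟨p, hp⟩ => hp p.start_mem_support

namespace SimpleGraph

omit [Fintype V] in
theorem IsAcyclic.inSubtree_of_inSubtree_adj {G : SimpleGraph V} (hG : G.IsAcyclic)
    {u v w x : V} (huv : G.Adj u v) (huw : G.Adj u w) (hwv : w ≠ v)
    (hx : InSubtree G w u x) : InSubtree G u v x := by
  obtain ⟨p, hup⟩ := hx
  -- a path from `v` to `w` inside `p` would be a second `v`–`w` path besides `v - u - w`
  have hvp : v ∉ p.support := by
    intro hv
    let q : G.Path v w := ⟨(p.dropUntil v hv).bypass, Walk.bypass_isPath _⟩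
    let r : G.Path v w := ⟨.cons huv.symm (.cons huw .nil), by
      simp [Walk.cons_isPath_iff, huv.ne', huw.ne, hwv.symm]⟩
    have huq : u ∈ (q : G.Walk v w).support := by
      rw [(hG.subsingleton_path v w).elim q r]
      simp [r]
    exact hup (p.support_dropUntil_subset_support hv (Walk.support_bypass_subset_support _ huq))
  exact ⟨p.concat huw.symm, by simp [Walk.support_concat, hvp, huv.ne']⟩

omit [Fintype V] in
theorem IsAcyclic.setOf_inSubtree_ssubset {G : SimpleGraph V} (hG : G.IsAcyclic)
    {u v w : V} (huv : G.Adj u v) (huw : G.Adj u w) (hwv : w ≠ v) :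
    {x | InSubtree G w u x} ⊂ {x | InSubtree G u v x} :=
  Set.ssubset_iff_of_subset (fun _ => hG.inSubtree_of_inSubtree_adj huv huw hwv) |>.2
    ⟨u, inSubtree_self huv, not_inSubtree_right G w u⟩

end SimpleGraph

theorem MsgSystem.eq_of_eqOn_inSubtree {G : SimpleGraph V} [DecidableRel G.Adj]
    (hG : G.IsAcyclic) {bag : V → Finset Att} {L₁ L₂ : V → (∀ a, Val a) → D}
    {M₁ M₂ : V → V → (∀ a, Val a) → D} (h₁ : MsgSystem G bag L₁ M₁)
    (h₂ : MsgSystem G bag L₂ M₂) {u v : V} (huv : G.Adj u v)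
    (hloc : ∀ w, InSubtree G u v w → L₁ w = L₂ w) : M₁ u v = M₂ u v := by
  rw [h₁ u v huv, h₂ u v huv, hloc u (inSubtree_self huv)]
  congr 1
  funext t
  refine congrArg _ (Finset.prod_congr rfl fun w hw => ?_)
  have hwv : w ≠ v := Finset.ne_of_mem_erase hw
  have huw : G.Adj u w := (G.mem_neighborFinset u w).1 (Finset.mem_of_mem_erase hw)
  exact congrFun (eq_of_eqOn_inSubtree hG h₁ h₂ huw.symm
    fun x hx => hloc x (hG.inSubtree_of_inSubtree_adj huv huw hwv hx)) t
termination_by {x | InSubtree G u v x}.ncard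
decreasing_by
  exact Set.ncard_lt_ncard (hG.setOf_inSubtree_ssubset huv huw hwv)

theorem message_root_independence_general (G : SimpleGraph V) [DecidableRel G.Adj]
    (hG : G.IsTree) (bag : V → Finset Att)
    (L₁ L₂ : V → (∀ a, Val a) → D)
    (M₁ M₂ : V → V → (∀ a, Val a) → D)
    (h₁ : MsgSystem G bag L₁ M₁) (h₂ : MsgSystem G bag L₂ M₂)
    (u v : V) (huv : G.Adj u v)
    (hloc : ∀ w, InSubtree G u v w → L₁ w = L₂ w) :
    M₁ u v = M₂ u v :=
  MsgSystem.eq_of_eqOn_inSubtree hG.isAcyclic h₁ h₂ huv hloc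

/-- Root independence / subtree dependence of messages: in a junction tree, the
message along a directed edge `u → v` depends only on the local relations of
the subtree rooted at `u` away from `v`; in particular any two message systems
(computed with any roots and in any order) assign the same message to `u → v`
whenever their local relations agree on that subtree. -/
theorem message_root_independence (G : SimpleGraph V) [DecidableRel G.Adj]
    (hG : G.IsTree) (bag : V → Finset Att)
    (hRI : RunningIntersection G bag)
    (L₁ L₂ : V → (∀ a, Val a) → D)
    (hL₁ : ∀ v, DependsOnlyOn (L₁ v) (bag v))
    (hL₂ : ∀ v, DependsOnlyOn (L₂ v) (bag v))
    (M₁ M₂ : V → V → (∀ a, Val a) → D)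
    (h₁ : MsgSystem G bag L₁ M₁) (h₂ : MsgSystem G bag L₂ M₂)
    (u v : V) (huv : G.Adj u v)
    (hloc : ∀ w, InSubtree G u v w → L₁ w = L₂ w) :
    M₁ u v = M₂ u v :=
  message_root_independence_general G hG bag L₁ L₂ M₁ M₂ h₁ h₂ u v huv hloc
end

section
/- Correctness of upward message passing: in a junction tree over a commutative semiring with root bag r, the absorption at r (the join of all relations mapped to r with all incoming messages to r), after marginalizing out all attributes of r not in a target attribute set S', equals the marginalization onto S' of the full join of all base relations, provided S' is contained in r's attribute set. -/
set_option linter.unusedSectionVars false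
set_option maxHeartbeats 1000000


open Finset

variable {Att : Type*} [Fintype Att] [DecidableEq Att]
variable {Val : Att → Type*} [∀ a, Fintype (Val a)] [∀ a, DecidableEq (Val a)]
variable {D : Type*} [CommSemiring D]

lemma margOver_empty (R : (∀ a, Val a) → D) : margOver ∅ R = R := by
  funext t
  unfold margOver
  rw [Fintype.sum_eq_single t]
  · simp
  · intro s hs
    rw [if_neg]
    intro h
    exact hs (funext fun a => h a (by simp))

lemma dependsOn_mono {R : (∀ a, Val a) → D} {S S' : Finset Att}
    (h : DependsOnlyOn R S) (hs : S ⊆ S') : DependsOnlyOn R S' :=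
  fun t₁ t₂ ht => h t₁ t₂ fun a ha => ht a (hs ha)

lemma dependsOn_mul {R T : (∀ a, Val a) → D} {S : Finset Att}
    (hR : DependsOnlyOn R S) (hT : DependsOnlyOn T S) :
    DependsOnlyOn (fun t => R t * T t) S :=
  fun t₁ t₂ ht => by
    show R t₁ * T t₁ = R t₂ * T t₂
    rw [hR t₁ t₂ ht, hT t₁ t₂ ht]

lemma dependsOn_prod {ι : Type*} {s : Finset ι} {P : ι → (∀ a, Val a) → D} {S : Finset Att}
    (h : ∀ i ∈ s, DependsOnlyOn (P i) S) :
    DependsOnlyOn (fun t => ∏ i ∈ s, P i t) S :=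
  fun t₁ t₂ ht => Finset.prod_congr rfl fun i hi => h i hi t₁ t₂ ht

lemma dependsOn_margOver {R : (∀ a, Val a) → D} {S E : Finset Att}
    (h : DependsOnlyOn R S) : DependsOnlyOn (margOver E R) (S \ E) := by
  intro t₁ t₂ ht
  unfold margOver
  refine Fintype.sum_bijective (fun s a => if a ∈ E then s a else Equiv.swap (t₁ a) (t₂ a) (s a))
    ?_ _ _ fun s => ?_
  · apply Function.bijective_iff_has_inverse.mpr
    refine ⟨fun s a => if a ∈ E then s a else Equiv.swap (t₁ a) (t₂ a) (s a), fun s => ?_, fun s => ?_⟩ <;>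
      · funext a; by_cases ha : a ∈ E <;> simp [ha]
  · have hiff : (∀ a, a ∉ E → s a = t₁ a) ↔
        (∀ a, a ∉ E → (if a ∈ E then s a else Equiv.swap (t₁ a) (t₂ a) (s a)) = t₂ a) := by
      constructor
      · intro hc a ha; simp [ha, hc a ha]
      · intro hc a ha
        have h1 : Equiv.swap (t₁ a) (t₂ a) (s a) = t₂ a := by simpa [ha] using hc a ha
        have h2 := congrArg (Equiv.swap (t₁ a) (t₂ a)) h1
        simpa using h2
    by_cases hc : ∀ a, a ∉ E → s a = t₁ a
    · rw [if_pos hc, if_pos (hiff.mp hc)]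
      apply h
      intro a ha
      by_cases haE : a ∈ E
      · simp [haE]
      · have h1 : s a = t₁ a := hc a haE
        have h2 : t₁ a = t₂ a := ht a (Finset.mem_sdiff.mpr ⟨ha, haE⟩)
        simp [haE, h1, h2]
    · rw [if_neg hc, if_neg (fun hx => hc (hiff.mpr hx))]

lemma margOver_mul {R T : (∀ a, Val a) → D} {S E : Finset Att}
    (hT : DependsOnlyOn T S) (hd : Disjoint S E) :
    margOver E (fun t => R t * T t) = fun t => margOver E R t * T t := by
  funext t
  unfold margOver
  rw [Finset.sum_mul]
  refine Finset.sum_congr rfl fun s _ => ?_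
  by_cases h : ∀ a, a ∉ E → s a = t a
  · rw [if_pos h, if_pos h]
    show R s * T s = R s * T t
    rw [hT s t fun a ha => h a (Finset.disjoint_left.mp hd ha)]
  · rw [if_neg h, if_neg h, zero_mul]

lemma margOver_margOver {R : (∀ a, Val a) → D} {E F : Finset Att} (hd : Disjoint E F) :
    margOver E (margOver F R) = margOver (E ∪ F) R := by
  funext t
  unfold margOver
  have key : ∀ s : ∀ a, Val a,
      (if ∀ a, a ∉ E → s a = t a then
        (∑ s' : ∀ a, Val a, if ∀ a, a ∉ F → s' a = s a then R s' else 0) else 0)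
      = ∑ s' : ∀ a, Val a,
          if (∀ a, a ∉ E → s a = t a) ∧ (∀ a, a ∉ F → s' a = s a) then R s' else 0 := by
    intro s
    split_ifs with h
    · exact Finset.sum_congr rfl fun s' _ => (if_congr (and_iff_right h) rfl rfl).symm
    · exact (Finset.sum_eq_zero fun s' _ => if_neg fun hc => h hc.1).symm
  rw [Finset.sum_congr rfl fun s _ => key s, Finset.sum_comm]
  refine Finset.sum_congr rfl fun s' _ => ?_
  set s₀ : ∀ a, Val a := fun a => if a ∈ E then s' a else t a with hs₀
  rw [Fintype.sum_eq_single s₀ ?_]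
  · have hiff : ((∀ a, a ∉ E → s₀ a = t a) ∧ (∀ a, a ∉ F → s' a = s₀ a)) ↔
        (∀ a, a ∉ E ∪ F → s' a = t a) := by
      constructor
      · rintro ⟨h1, h2⟩ a ha
        rw [Finset.mem_union] at ha
        push_neg at ha
        rw [h2 a ha.2, h1 a ha.1]
      · intro h
        refine ⟨fun a ha => by simp [hs₀, ha], fun a ha => ?_⟩
        by_cases haE : a ∈ E
        · simp [hs₀, haE]
        · have : a ∉ E ∪ F := by simp [haE, ha]
          simp [hs₀, haE, h a this]
    rw [if_congr hiff rfl rfl]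
  · intro s hs
    rw [if_neg]
    rintro ⟨h1, h2⟩
    apply hs
    funext a
    by_cases ha : a ∈ E
    · have haF : a ∉ F := Finset.disjoint_left.mp hd ha
      simp [hs₀, ha, ← h2 a haF]
    · simp [hs₀, ha, h1 a ha]

lemma prod_margOver {ι : Type*} [DecidableEq ι] (s : Finset ι)
    (P : ι → (∀ a, Val a) → D) (B : ι → Finset Att) (C : Finset Att)
    (hdep : ∀ i ∈ s, DependsOnlyOn (P i) (B i))
    (hpair : ∀ i ∈ s, ∀ j ∈ s, i ≠ j → B i ∩ B j ⊆ C) :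
    (fun t => ∏ i ∈ s, margOver (B i \ C) (P i) t)
      = margOver (s.biUnion fun i => B i \ C) (fun t => ∏ i ∈ s, P i t) := by
  classical
  revert hdep hpair
  induction s using Finset.induction_on with
  | empty => intro _ _; simp [margOver_empty]
  | insert i s hi ih =>
    intro hdep hpair
    have hdep' : ∀ j ∈ s, DependsOnlyOn (P j) (B j) := fun j hj => hdep j (Finset.mem_insert_of_mem hj)
    have hpair' : ∀ a ∈ s, ∀ b ∈ s, a ≠ b → B a ∩ B b ⊆ C := fun a ha b hb =>
      hpair a (Finset.mem_insert_of_mem ha) b (Finset.mem_insert_of_mem hb)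
    set F : Finset Att := s.biUnion fun j => B j \ C with hF
    have hFC : ∀ a ∈ F, a ∉ C := by
      intro a ha
      rw [hF, Finset.mem_biUnion] at ha
      obtain ⟨j, _, haj⟩ := ha
      exact (Finset.mem_sdiff.mp haj).2
    have hFBi : Disjoint (B i) F := by
      rw [Finset.disjoint_left]
      intro a hai haF
      rw [hF, Finset.mem_biUnion] at haF
      obtain ⟨j, hj, haj⟩ := haF
      rw [Finset.mem_sdiff] at haj
      exact haj.2 (hpair i (Finset.mem_insert_self i s) j (Finset.mem_insert_of_mem hj)
        (fun h => hi (h ▸ hj)) (Finset.mem_inter.mpr ⟨hai, haj.1⟩))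
    have hdisj : Disjoint (B i \ C) F := Finset.disjoint_of_subset_left Finset.sdiff_subset hFBi
    have hmargF : DependsOnlyOn (margOver F (fun t => ∏ j ∈ s, P j t)) ((s.sup B) \ F) :=
      dependsOn_margOver (dependsOn_prod fun j hj =>
        dependsOn_mono (hdep' j hj) (Finset.le_sup hj))
    have hdisj2 : Disjoint ((s.sup B) \ F) (B i \ C) := by
      rw [Finset.disjoint_left]
      intro a ha hai
      rw [Finset.mem_sdiff] at ha hai
      rw [Finset.mem_sup] at ha
      obtain ⟨⟨j, hj, haj⟩, haF⟩ := ha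
      apply haF
      rw [hF, Finset.mem_biUnion]
      refine ⟨j, hj, Finset.mem_sdiff.mpr ⟨haj, fun hC => hai.2 hC⟩⟩
    funext t
    rw [Finset.prod_insert hi, congrFun (ih hdep' hpair') t]
    have step1 : margOver (B i \ C) (P i) t * margOver F (fun t => ∏ j ∈ s, P j t) t
        = margOver (B i \ C) (fun t => P i t * margOver F (fun t => ∏ j ∈ s, P j t) t) t :=
      (congrFun (margOver_mul hmargF hdisj2) t).symm
    rw [step1]
    have step2 : (fun t => P i t * margOver F (fun t => ∏ j ∈ s, P j t) t)
        = fun t => margOver F (fun t => (∏ j ∈ s, P j t) * P i t) t := by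
      funext t'
      rw [congrFun (margOver_mul (hdep i (Finset.mem_insert_self i s)) hFBi) t']
      ring
    rw [step2, margOver_margOver hdisj]
    have hset : (B i \ C) ∪ F = (insert i s).biUnion fun j => B j \ C := by
      rw [Finset.biUnion_insert]
    rw [hset]
    congr 1
    funext t'
    rw [Finset.prod_insert hi]
    ring

variable {V : Type*} [Fintype V] [DecidableEq V]

open Classical in
noncomputable def subT (G : SimpleGraph V) (u v : V) : Finset V :=
  Finset.univ.filter (InSubtree G u v)

lemma mem_subT {G : SimpleGraph V} {u v w : V} : w ∈ subT G u v ↔ InSubtree G u v w := by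
  classical
  simp [subT]

lemma self_mem_subT {G : SimpleGraph V} {u v : V} (h : u ≠ v) : u ∈ subT G u v :=
  mem_subT.mpr ⟨SimpleGraph.Walk.nil, by simp [Ne.symm h]⟩

lemma not_mem_subT_self {G : SimpleGraph V} {u w : V} : u ∉ subT G w u := by
  rw [mem_subT]
  rintro ⟨p, hp⟩
  exact hp p.start_mem_support

lemma not_both {G : SimpleGraph V} (hG : G.IsTree) {u v : V} (huv : G.Adj u v) (w : V)
    (h1 : InSubtree G u v w) (h2 : InSubtree G v u w) : False := by
  obtain ⟨p, hp⟩ := h1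
  obtain ⟨q, hq⟩ := h2
  have hedge : (SimpleGraph.Walk.cons huv SimpleGraph.Walk.nil : G.Walk u v).IsPath := by
    simp [SimpleGraph.Walk.isPath_def, huv.ne]
  have huniq := hG.existsUnique_path u v
  have hbp : (p.reverse.append q).bypass.IsPath := SimpleGraph.Walk.bypass_isPath _
  have heq : (p.reverse.append q).bypass = SimpleGraph.Walk.cons huv SimpleGraph.Walk.nil :=
    huniq.unique hbp hedge
  have hmem : s(u, v) ∈ (p.reverse.append q).bypass.edges := by
    rw [heq]; simp
  have hmem' := SimpleGraph.Walk.edges_bypass_subset _ hmem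
  rw [SimpleGraph.Walk.edges_append, List.mem_append] at hmem'
  rcases hmem' with h | h
  · have : v ∈ p.reverse.support := SimpleGraph.Walk.snd_mem_support_of_mem_edges _ h
    rw [SimpleGraph.Walk.support_reverse, List.mem_reverse] at this
    exact hp this
  · exact hq (SimpleGraph.Walk.fst_mem_support_of_mem_edges _ h)

lemma resolve {G : SimpleGraph V} (hG : G.IsTree) {u v : V} (hne : u ≠ v) (w : V) :
    InSubtree G u v w ∨ InSubtree G v u w := by
  obtain ⟨q⟩ := hG.isConnected.preconnected w v
  set p := q.bypass with hp
  have hpath : p.IsPath := q.bypass_isPath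
  by_cases hu : u ∈ p.support
  · left
    refine ⟨p.takeUntil u hu, ?_⟩
    intro hv
    have hvd : v ∈ (p.dropUntil u hu).support := SimpleGraph.Walk.end_mem_support _
    have hspec := SimpleGraph.Walk.take_spec p hu
    have hnodup : p.support.Nodup := hpath.support_nodup
    rw [← hspec, SimpleGraph.Walk.support_append] at hnodup
    have hdisj := List.disjoint_of_nodup_append hnodup
    have : v ∈ (p.dropUntil u hu).support.tail := by
      have := hvd
      rw [SimpleGraph.Walk.support_eq_cons (p.dropUntil u hu), List.mem_cons] at this
      rcases this with h | h
      · exact absurd h.symm hne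
      · exact h
    exact hdisj hv this
  · right
    exact ⟨p, hu⟩

lemma exists_neighbor {G : SimpleGraph V} {w' u : V} (p : G.Walk w' u) (hp : p.IsPath)
    (hne : w' ≠ u) :
    ∃ w, G.Adj u w ∧ ∃ q : G.Walk w' w, u ∉ q.support ∧ q.support ⊆ p.support := by
  obtain ⟨w, hadj, q, hq⟩ := SimpleGraph.Walk.exists_eq_cons_of_ne (Ne.symm hne) p.reverse
  refine ⟨w, hadj, q.reverse, ?_, ?_⟩
  · have hnodup : p.reverse.support.Nodup := hp.reverse.support_nodup
    rw [hq, SimpleGraph.Walk.support_cons] at hnodup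
    intro hu
    rw [SimpleGraph.Walk.support_reverse, List.mem_reverse] at hu
    exact (List.nodup_cons.mp hnodup).1 hu
  · intro x hx
    rw [SimpleGraph.Walk.support_reverse, List.mem_reverse] at hx
    have : x ∈ p.reverse.support := by
      rw [hq, SimpleGraph.Walk.support_cons]
      exact List.mem_cons_of_mem _ hx
    rw [SimpleGraph.Walk.support_reverse, List.mem_reverse] at this
    exact this

lemma subT_subset {G : SimpleGraph V} [DecidableRel G.Adj] (hG : G.IsTree) {u v w : V} (huv : G.Adj u v)
    (hw : w ∈ (G.neighborFinset u).erase v) : subT G w u ⊆ subT G u v := by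
  rw [Finset.mem_erase, SimpleGraph.mem_neighborFinset] at hw
  obtain ⟨hwv, huw⟩ := hw
  intro w' hw'
  rw [mem_subT] at hw' ⊢
  obtain ⟨q, hq⟩ := hw'
  rcases resolve hG huv.ne w' with h | h
  · exact h
  · exfalso
    obtain ⟨q', hq'⟩ := h
    have hwsub : InSubtree G v u w := by
      refine ⟨q.reverse.append q', ?_⟩
      rw [SimpleGraph.Walk.mem_support_append_iff]
      rintro (h | h)
      · rw [SimpleGraph.Walk.support_reverse, List.mem_reverse] at h
        exact hq h
      · exact hq' h
    have hwsub2 : InSubtree G u v w := by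
      refine ⟨SimpleGraph.Walk.cons huw.symm SimpleGraph.Walk.nil, ?_⟩
      simp [Ne.symm hwv, huv.ne']
    exact not_both hG huv w hwsub2 hwsub

lemma subT_pairwise_disjoint {G : SimpleGraph V} (hG : G.IsTree) {u w₁ w₂ : V}
    (h1 : G.Adj u w₁) (h2 : G.Adj u w₂) (hne : w₁ ≠ w₂) (w' : V)
    (hw1 : w' ∈ subT G w₁ u) (hw2 : w' ∈ subT G w₂ u) : False := by
  rw [mem_subT] at hw1 hw2
  obtain ⟨q₁, hq₁⟩ := hw1
  obtain ⟨q₂, hq₂⟩ := hw2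
  have hA : InSubtree G w₂ u w₁ := by
    refine ⟨q₁.reverse.append q₂, ?_⟩
    rw [SimpleGraph.Walk.mem_support_append_iff]
    rintro (h | h)
    · rw [SimpleGraph.Walk.support_reverse, List.mem_reverse] at h
      exact hq₁ h
    · exact hq₂ h
  have hB : InSubtree G u w₂ w₁ := by
    refine ⟨SimpleGraph.Walk.cons h1.symm SimpleGraph.Walk.nil, ?_⟩
    simp [Ne.symm hne, h2.ne']
  exact not_both hG h2 w₁ hB hA

lemma subT_decomp {G : SimpleGraph V} [DecidableRel G.Adj] (hG : G.IsTree) {u v : V} (huv : G.Adj u v) :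
    subT G u v = insert u (((G.neighborFinset u).erase v).biUnion (fun w => subT G w u)) := by
  apply Finset.Subset.antisymm
  · intro w' hw'
    rw [Finset.mem_insert]
    by_cases hwu : w' = u
    · left; exact hwu
    · right
      rw [mem_subT] at hw'
      obtain ⟨p, hp⟩ := hw'
      have hbp : v ∉ p.bypass.support := fun h => hp (p.support_bypass_subset h)
      obtain ⟨w, hadj, q, hqu, hqsub⟩ := exists_neighbor p.bypass p.bypass_isPath hwu
      have hqv : v ∉ q.support := fun h => hbp (hqsub h)
      rw [Finset.mem_biUnion]
      refine ⟨w, ?_, mem_subT.mpr ⟨q, hqu⟩⟩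
      rw [Finset.mem_erase, SimpleGraph.mem_neighborFinset]
      exact ⟨fun h => hqv (h ▸ q.end_mem_support), hadj⟩
  · intro w' hw'
    rw [Finset.mem_insert, Finset.mem_biUnion] at hw'
    rcases hw' with rfl | ⟨w, hw, hw'⟩
    · exact self_mem_subT huv.ne
    · exact subT_subset hG huv hw hw'

lemma univ_decomp {G : SimpleGraph V} [DecidableRel G.Adj] (hG : G.IsTree) (r : V) :
    (Finset.univ : Finset V) = insert r ((G.neighborFinset r).biUnion (fun w => subT G w r)) := by
  apply Finset.Subset.antisymm
  · intro w' _
    rw [Finset.mem_insert]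
    by_cases hwu : w' = r
    · left; exact hwu
    · right
      obtain ⟨p0⟩ := hG.isConnected.preconnected w' r
      obtain ⟨w, hadj, q, hqu, _⟩ := exists_neighbor p0.bypass p0.bypass_isPath hwu
      rw [Finset.mem_biUnion]
      exact ⟨w, (SimpleGraph.mem_neighborFinset _ _ _).mpr hadj, mem_subT.mpr ⟨q, hqu⟩⟩
  · intro _ _; exact Finset.mem_univ _

lemma subT_card_lt {G : SimpleGraph V} [DecidableRel G.Adj] (hG : G.IsTree) {u v w : V} (huv : G.Adj u v)
    (hw : w ∈ (G.neighborFinset u).erase v) : (subT G w u).card < (subT G u v).card := by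
  apply Finset.card_lt_card
  rw [Finset.ssubset_iff_of_subset (subT_subset hG huv hw)]
  exact ⟨u, self_mem_subT huv.ne, not_mem_subT_self⟩


section RILemmas

variable {G : SimpleGraph V} (hG : G.IsTree) {bag : V → Finset Att}
  (hRI : RunningIntersection G bag)

include hG hRI in
lemma ri_subtree {u v w' : V} (huv : G.Adj u v) (hw' : w' ∈ subT G u v) {a : Att}
    (ha1 : a ∈ bag w') (ha2 : a ∈ bag v) : a ∈ bag u := by
  obtain ⟨q0⟩ := hG.isConnected.preconnected w' v
  have hu : u ∈ q0.bypass.support := by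
    by_contra hu
    exact not_both hG huv w' (mem_subT.mp hw') ⟨q0.bypass, hu⟩
  exact hRI a w' v q0.bypass q0.bypass_isPath ha1 ha2 u hu

include hG hRI in
lemma ri_cross {u w₁ w₂ w₁' w₂' : V} (h1 : G.Adj u w₁) (h2 : G.Adj u w₂) (hne : w₁ ≠ w₂)
    (hw1 : w₁' ∈ subT G w₁ u) (hw2 : w₂' ∈ subT G w₂ u) {a : Att}
    (ha1 : a ∈ bag w₁') (ha2 : a ∈ bag w₂') : a ∈ bag u := by
  obtain ⟨q0⟩ := hG.isConnected.preconnected w₁' w₂'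
  have hu : u ∈ q0.bypass.support := by
    by_contra hu
    obtain ⟨q₁, hq₁⟩ := mem_subT.mp hw1
    have hIn : InSubtree G w₁ u w₂' := by
      refine ⟨q0.bypass.reverse.append q₁, ?_⟩
      rw [SimpleGraph.Walk.mem_support_append_iff]
      rintro (h | h)
      · rw [SimpleGraph.Walk.support_reverse, List.mem_reverse] at h
        exact hu h
      · exact hq₁ h
    exact subT_pairwise_disjoint hG h1 h2 hne w₂' (mem_subT.mpr hIn) hw2
  exact hRI a w₁' w₂' q0.bypass q0.bypass_isPath ha1 ha2 u hu

end RILemmas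

lemma pairwiseDisjoint_subT {G : SimpleGraph V} [DecidableRel G.Adj] (hG : G.IsTree) {u : V}
    {s : Finset V} (hs : s ⊆ G.neighborFinset u) :
    Set.PairwiseDisjoint ↑s (fun w => subT G w u) := by
  intro w₁ h1 w₂ h2 hne
  have a1 : G.Adj u w₁ := (SimpleGraph.mem_neighborFinset _ _ _).mp (hs h1)
  have a2 : G.Adj u w₂ := (SimpleGraph.mem_neighborFinset _ _ _).mp (hs h2)
  show Disjoint (subT G w₁ u) (subT G w₂ u)
  rw [Finset.disjoint_left]
  intro x hx1 hx2
  exact subT_pairwise_disjoint hG a1 a2 hne x hx1 hx2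

lemma joinMsg (G : SimpleGraph V) [DecidableRel G.Adj] (hG : G.IsTree) (bag : V → Finset Att)
    (hRI : RunningIntersection G bag) (L : V → (∀ a, Val a) → D)
    (hL : ∀ v, DependsOnlyOn (L v) (bag v))
    (M : V → V → (∀ a, Val a) → D) (u : V) (s : Finset V) (hs : s ⊆ G.neighborFinset u)
    (hMf : ∀ w ∈ s, M w u = margOver (((subT G w u).sup bag) \ bag u)
        (fun t => ∏ x ∈ subT G w u, L x t)) :
    (fun t => L u t * ∏ w ∈ s, M w u t)
      = margOver (s.biUnion fun w => ((subT G w u).sup bag) \ bag u)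
          (fun t => L u t * ∏ w ∈ s, ∏ x ∈ subT G w u, L x t) := by
  set B : V → Finset Att := fun w => (subT G w u).sup bag with hB
  have hdep : ∀ w ∈ s, DependsOnlyOn (fun t => ∏ x ∈ subT G w u, L x t) (B w) :=
    fun w _ => dependsOn_prod fun x hx => dependsOn_mono (hL x) (Finset.le_sup hx)
  have hpair : ∀ w₁ ∈ s, ∀ w₂ ∈ s, w₁ ≠ w₂ → B w₁ ∩ B w₂ ⊆ bag u := by
    intro w₁ h1 w₂ h2 hne a ha
    rw [Finset.mem_inter, hB] at ha
    simp only [Finset.mem_sup] at ha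
    obtain ⟨⟨x1, hx1, hax1⟩, ⟨x2, hx2, hax2⟩⟩ := ha
    exact ri_cross hG hRI ((SimpleGraph.mem_neighborFinset _ _ _).mp (hs h1))
      ((SimpleGraph.mem_neighborFinset _ _ _).mp (hs h2)) hne hx1 hx2 hax1 hax2
  have h1 : (fun t => ∏ w ∈ s, M w u t)
      = margOver (s.biUnion fun w => B w \ bag u)
          (fun t => ∏ w ∈ s, ∏ x ∈ subT G w u, L x t) := by
    have heq : (fun t => ∏ w ∈ s, M w u t)
        = fun t => ∏ w ∈ s, margOver (B w \ bag u) (fun t => ∏ x ∈ subT G w u, L x t) t := by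
      funext t
      exact Finset.prod_congr rfl fun w hw => by rw [hMf w hw]
    rw [heq]
    exact prod_margOver s _ B (bag u) hdep hpair
  have hFbag : Disjoint (bag u) (s.biUnion fun w => B w \ bag u) := by
    rw [Finset.disjoint_right]
    intro a ha
    rw [Finset.mem_biUnion] at ha
    obtain ⟨w, _, haw⟩ := ha
    exact (Finset.mem_sdiff.mp haw).2
  funext t
  rw [congrFun h1 t]
  have hm := congrFun (margOver_mul (R := fun t => ∏ w ∈ s, ∏ x ∈ subT G w u, L x t)
    (T := L u) (hL u) hFbag) t
  rw [mul_comm, ← hm]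
  congr 1
  funext t'
  ring

lemma msg_formula (G : SimpleGraph V) [DecidableRel G.Adj] (hG : G.IsTree)
    (bag : V → Finset Att) (hRI : RunningIntersection G bag)
    (L : V → (∀ a, Val a) → D) (hL : ∀ v, DependsOnlyOn (L v) (bag v))
    (M : V → V → (∀ a, Val a) → D) (hM : MsgSystem G bag L M) :
    ∀ n, ∀ u v : V, G.Adj u v → (subT G u v).card ≤ n →
      M u v = margOver (((subT G u v).sup bag) \ bag v)
        (fun t => ∏ x ∈ subT G u v, L x t) := by
  intro n
  induction n with
  | zero =>
    intro u v huv hcard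
    have := Finset.card_pos.mpr ⟨u, self_mem_subT (G := G) huv.ne⟩
    omega
  | succ n ih =>
    intro u v huv hcard
    rw [hM u v huv]
    set s := (G.neighborFinset u).erase v with hsdef
    have hsub : s ⊆ G.neighborFinset u := Finset.erase_subset _ _
    have hMf : ∀ w ∈ s, M w u = margOver (((subT G w u).sup bag) \ bag u)
        (fun t => ∏ x ∈ subT G w u, L x t) := by
      intro w hw
      have hadj : G.Adj u w := (SimpleGraph.mem_neighborFinset _ _ _).mp (hsub hw)
      have hlt := subT_card_lt hG huv hw
      exact ih w u hadj.symm (by omega)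
    rw [joinMsg G hG bag hRI L hL M u s hsub hMf]
    have hdisj : Disjoint (bag u \ bag v) (s.biUnion fun w => ((subT G w u).sup bag) \ bag u) := by
      rw [Finset.disjoint_right]
      intro a ha
      rw [Finset.mem_biUnion] at ha
      obtain ⟨w, _, haw⟩ := ha
      exact fun hav => (Finset.mem_sdiff.mp haw).2 (Finset.mem_sdiff.mp hav).1
    rw [margOver_margOver hdisj]
    have hset : (bag u \ bag v) ∪ (s.biUnion fun w => ((subT G w u).sup bag) \ bag u)
        = ((subT G u v).sup bag) \ bag v := by
      ext a
      simp only [Finset.mem_union, Finset.mem_sdiff, Finset.mem_biUnion, Finset.mem_sup]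
      constructor
      · rintro (⟨hau, hav⟩ | ⟨w, hw, ha⟩)
        · exact ⟨⟨u, self_mem_subT huv.ne, hau⟩, hav⟩
        · obtain ⟨⟨x, hx, hax⟩, hau⟩ := ha
          have hxuv : x ∈ subT G u v := subT_subset hG huv hw hx
          refine ⟨⟨x, hxuv, hax⟩, fun hav => hau ?_⟩
          exact ri_subtree hG hRI huv hxuv hax hav
      · rintro ⟨⟨x, hx, hax⟩, hav⟩
        by_cases hau : a ∈ bag u
        · exact Or.inl ⟨hau, hav⟩
        · right
          rw [subT_decomp hG huv, Finset.mem_insert] at hx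
          rcases hx with rfl | hx
          · exact absurd hax hau
          · rw [Finset.mem_biUnion] at hx
            obtain ⟨w, hw, hx⟩ := hx
            exact ⟨w, hw, ⟨x, hx, hax⟩, hau⟩
    rw [hset]
    have hnm : u ∉ ((G.neighborFinset u).erase v).biUnion (fun w => subT G w u) := by
      rw [Finset.mem_biUnion]
      rintro ⟨w, _, hu⟩
      exact not_mem_subT_self hu
    refine congrArg _ (funext fun t => ?_)
    rw [hsdef, subT_decomp hG huv, Finset.prod_insert hnm,
      Finset.prod_biUnion (pairwiseDisjoint_subT hG (Finset.erase_subset _ _))]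


/-- Correctness of upward message passing: the absorption at the root `r`,
marginalized onto a target attribute set `S' ⊆ bag r`, equals the
marginalization onto `S'` of the full join of all base relations. -/
theorem upward_message_passing_correct (G : SimpleGraph V) [DecidableRel G.Adj]
    (hG : G.IsTree) (bag : V → Finset Att)
    (hRI : RunningIntersection G bag)
    (L : V → (∀ a, Val a) → D)
    (hL : ∀ v, DependsOnlyOn (L v) (bag v))
    (M : V → V → (∀ a, Val a) → D) (hM : MsgSystem G bag L M)
    (r : V) (S' : Finset Att) (hS' : S' ⊆ bag r) :
    margOver (bag r \ S') (absorb G L M r) =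
      margOver ((Finset.univ.sup bag) \ S') (fun t => ∏ v, L v t) := by
  have hjoin := joinMsg G hG bag hRI L hL M r (G.neighborFinset r) (le_refl _)
    (fun w hw => msg_formula G hG bag hRI L hL M hM (subT G w r).card w r
      ((SimpleGraph.mem_neighborFinset _ _ _).mp hw).symm (le_refl _))
  have habs : absorb G L M r = fun t => L r t * ∏ w ∈ G.neighborFinset r, M w r t := rfl
  rw [habs, hjoin]
  have hSbag : S' ⊆ bag r := hS'
  have hdisj : Disjoint (bag r \ S')
      ((G.neighborFinset r).biUnion fun w => ((subT G w r).sup bag) \ bag r) := by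
    rw [Finset.disjoint_right]
    intro a ha
    rw [Finset.mem_biUnion] at ha
    obtain ⟨w, _, haw⟩ := ha
    exact fun hav => (Finset.mem_sdiff.mp haw).2 (Finset.mem_sdiff.mp hav).1
  rw [margOver_margOver hdisj]
  have hset : (bag r \ S') ∪ ((G.neighborFinset r).biUnion fun w => ((subT G w r).sup bag) \ bag r)
      = (Finset.univ.sup bag) \ S' := by
    ext a
    simp only [Finset.mem_union, Finset.mem_sdiff, Finset.mem_biUnion, Finset.mem_sup]
    constructor
    · rintro (⟨har, haS⟩ | ⟨w, hw, ha⟩)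
      · exact ⟨⟨r, Finset.mem_univ r, har⟩, haS⟩
      · obtain ⟨⟨x, hx, hax⟩, har⟩ := ha
        exact ⟨⟨x, Finset.mem_univ x, hax⟩, fun haS => har (hSbag haS)⟩
    · rintro ⟨⟨x, _, hax⟩, haS⟩
      by_cases har : a ∈ bag r
      · exact Or.inl ⟨har, haS⟩
      · right
        have hx' : x ∈ insert r ((G.neighborFinset r).biUnion fun w => subT G w r) := by
          rw [← univ_decomp hG r]; exact Finset.mem_univ x
        rw [Finset.mem_insert] at hx'
        rcases hx' with rfl | hx'
        · exact absurd hax har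
        · rw [Finset.mem_biUnion] at hx'
          obtain ⟨w, hw, hx'⟩ := hx'
          exact ⟨w, hw, ⟨x, hx', hax⟩, har⟩
  rw [hset]
  have hnm : r ∉ (G.neighborFinset r).biUnion (fun w => subT G w r) := by
    rw [Finset.mem_biUnion]
    rintro ⟨w, _, hr⟩
    exact not_mem_subT_self hr
  refine congrArg _ (funext fun t => ?_)
  rw [show (∏ v, L v t) = ∏ v ∈ (Finset.univ : Finset V), L v t from rfl, univ_decomp hG r,
    Finset.prod_insert hnm, Finset.prod_biUnion (pairwiseDisjoint_subT hG (le_refl _))]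
end

section
/- Message reuse across queries: given a junction tree and two annotation assignments (to bags) for two queries, if a directed edge u → v is present in both and the annotations on the subtree rooted at u (away from v) coincide for both queries, then the message along u → v computed for the two queries is identical, irrespective of traversal order or choice of root. -/
open Finset

variable {Att : Type*} [Fintype Att] [DecidableEq Att]
variable {Val : Att → Type*} [∀ a, Fintype (Val a)] [∀ a, DecidableEq (Val a)]
variable {D : Type*} [CommSemiring D]

variable {V : Type*} [Fintype V] [DecidableEq V]

open scoped Classical in
/-- Message system for an annotated junction tree. Each bag `u` carries an
annotation: an operator `ann u` applied to the join of `u`'s (possibly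
excluded/updated) local relations with the incoming messages (modeling
selection and relation-exclusion annotations), and a set `prot u` of group-by
protected attributes, which are not marginalized out by `u` nor by any bag
downstream of `u`. -/
def AnnMsgSystem (G : SimpleGraph V) [DecidableRel G.Adj] (bag : V → Finset Att)
    (L : V → (∀ a, Val a) → D)
    (ann : V → ((∀ a, Val a) → D) → ((∀ a, Val a) → D))
    (prot : V → Finset Att)
    (M : V → V → (∀ a, Val a) → D) : Prop :=
  ∀ u v, G.Adj u v →
    M u v = margOver ((bag u \ bag v) \
        Finset.univ.filter (fun a => ∃ w, InSubtree G u v w ∧ a ∈ prot w))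
      (ann u (fun t => L u t * ∏ w ∈ (G.neighborFinset u).erase v, M w u t))

/-! The defining equation of the message `u → v` involves only the data at `u` and the messages
`w → u` from the other neighbours `w` of `u`. In an acyclic graph the subtree of `w` away from `u`
is a proper part of the subtree of `u` away from `v`, so strong induction on the size of the
subtree shows that the message is determined by the local relations and annotations on it. -/

section Subtree

omit [Fintype V] [DecidableEq V]

variable {G : SimpleGraph V} {u v w x : V}

lemma inSubtree_root (h : u ≠ v) : InSubtree G u v u :=
  ⟨.nil, by simpa using h.symm⟩

lemma not_inSubtree_avoided : ¬ InSubtree G u v v :=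
  fun ⟨p, hp⟩ => hp p.start_mem_support

/-- Any path from `v` to `w` avoiding `u` would close the cycle `v - u - w` with the two edges. -/
lemma InSubtree.of_child (hG : G.IsAcyclic) (huv : G.Adj u v) (huw : G.Adj u w) (hwv : w ≠ v)
    (hx : InSubtree G w u x) : InSubtree G u v x := by
  classical
  obtain ⟨p, hp⟩ := hx
  have hv : v ∉ p.support := by
    intro hv
    let q : G.Path v w := (p.dropUntil v hv).toPath
    have hq : u ∉ q.1.support := fun h =>
      hp (p.support_dropUntil_subset_support hv (SimpleGraph.Walk.support_bypass_subset_support _ h))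
    let r : G.Path v w := ⟨.cons huv.symm (.cons huw .nil), by
      simp [SimpleGraph.Walk.isPath_def, huv.ne', huw.ne, hwv.symm]⟩
    exact hq ((hG.subsingleton_path v w).elim q r ▸ by simp [r])
  refine ⟨p.concat huw.symm, ?_⟩
  simpa [SimpleGraph.Walk.support_concat] using ⟨hv, huv.ne'⟩

lemma setOf_inSubtree_ssubset_of_child (hG : G.IsAcyclic) (huv : G.Adj u v) (huw : G.Adj u w)
    (hwv : w ≠ v) : {x | InSubtree G w u x} ⊂ {x | InSubtree G u v x} :=
  Set.ssubset_iff_subset_ne.2 ⟨fun _ => InSubtree.of_child hG huv huw hwv,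
    fun h => not_inSubtree_avoided (h ▸ inSubtree_root huv.ne : u ∈ {x | InSubtree G w u x})⟩

end Subtree

theorem AnnMsgSystem.eq_of_eqOn_subtree {G : SimpleGraph V} [DecidableRel G.Adj]
    (hG : G.IsAcyclic) {bag : V → Finset Att} {L₁ L₂ : V → (∀ a, Val a) → D}
    {ann₁ ann₂ : V → ((∀ a, Val a) → D) → ((∀ a, Val a) → D)} {prot₁ prot₂ : V → Finset Att}
    {M₁ M₂ : V → V → (∀ a, Val a) → D}
    (h₁ : AnnMsgSystem G bag L₁ ann₁ prot₁ M₁) (h₂ : AnnMsgSystem G bag L₂ ann₂ prot₂ M₂)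
    {u v : V} (huv : G.Adj u v)
    (hL : ∀ w, InSubtree G u v w → L₁ w = L₂ w)
    (hann : ∀ w, InSubtree G u v w → ann₁ w = ann₂ w)
    (hprot : ∀ w, InSubtree G u v w → prot₁ w = prot₂ w) :
    M₁ u v = M₂ u v := by
  induction hn : {x | InSubtree G u v x}.ncard using Nat.strong_induction_on generalizing u v
    with | _ n ih => ?_
  have hincoming : ∀ w ∈ (G.neighborFinset u).erase v, M₁ w u = M₂ w u := by
    intro w hw
    obtain ⟨hwv, huw⟩ := Finset.mem_erase.1 hw
    have huw : G.Adj u w := (G.mem_neighborFinset u w).1 huw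
    have hchild : ∀ x, InSubtree G w u x → InSubtree G u v x :=
      fun _ => InSubtree.of_child hG huv huw hwv
    exact ih _ (hn ▸ Set.ncard_lt_ncard (setOf_inSubtree_ssubset_of_child hG huv huw hwv))
      huw.symm (fun x hx => hL x (hchild x hx)) (fun x hx => hann x (hchild x hx))
      (fun x hx => hprot x (hchild x hx)) rfl
  rw [h₁ u v huv, h₂ u v huv, hL u (inSubtree_root huv.ne), hann u (inSubtree_root huv.ne)]
  congr 2
  · classical exact Finset.filter_congr fun a _ =>
      exists_congr fun w => and_congr_right fun hw => Iff.of_eq (congrArg (a ∈ ·) (hprot w hw))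
  · funext t
    rw [Finset.prod_congr rfl fun w hw => congrFun (hincoming w hw) t]

theorem message_reuse_across_queries_general (G : SimpleGraph V) [DecidableRel G.Adj]
    (hG : G.IsTree) (bag : V → Finset Att)
    (L₁ L₂ : V → (∀ a, Val a) → D)
    (ann₁ ann₂ : V → ((∀ a, Val a) → D) → ((∀ a, Val a) → D))
    (prot₁ prot₂ : V → Finset Att)
    (M₁ M₂ : V → V → (∀ a, Val a) → D)
    (h₁ : AnnMsgSystem G bag L₁ ann₁ prot₁ M₁)
    (h₂ : AnnMsgSystem G bag L₂ ann₂ prot₂ M₂)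
    (u v : V) (huv : G.Adj u v)
    (hsameL : ∀ w, InSubtree G u v w → L₁ w = L₂ w)
    (hsameAnn : ∀ w, InSubtree G u v w → ann₁ w = ann₂ w)
    (hsameProt : ∀ w, InSubtree G u v w → prot₁ w = prot₂ w) :
    M₁ u v = M₂ u v :=
  h₁.eq_of_eqOn_subtree hG.isAcyclic h₂ huv hsameL hsameAnn hsameProt

/-- Message reuse across queries: if a directed edge `u → v` is present in both
annotated junction trees and the annotations (and local relations) coincide on
the whole subtree rooted at `u` away from `v`, then the messages along `u → v`
computed for the two queries are identical, irrespective of traversal order or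
choice of root. -/
theorem message_reuse_across_queries (G : SimpleGraph V) [DecidableRel G.Adj]
    (hG : G.IsTree) (bag : V → Finset Att)
    (hRI : RunningIntersection G bag)
    (L₁ L₂ : V → (∀ a, Val a) → D)
    (hL₁ : ∀ v, DependsOnlyOn (L₁ v) (bag v))
    (hL₂ : ∀ v, DependsOnlyOn (L₂ v) (bag v))
    (ann₁ ann₂ : V → ((∀ a, Val a) → D) → ((∀ a, Val a) → D))
    (prot₁ prot₂ : V → Finset Att)
    (M₁ M₂ : V → V → (∀ a, Val a) → D)
    (h₁ : AnnMsgSystem G bag L₁ ann₁ prot₁ M₁)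
    (h₂ : AnnMsgSystem G bag L₂ ann₂ prot₂ M₂)
    (u v : V) (huv : G.Adj u v)
    (hsameL : ∀ w, InSubtree G u v w → L₁ w = L₂ w)
    (hsameAnn : ∀ w, InSubtree G u v w → ann₁ w = ann₂ w)
    (hsameProt : ∀ w, InSubtree G u v w → prot₁ w = prot₂ w) :
    M₁ u v = M₂ u v :=
  message_reuse_across_queries_general G hG bag L₁ L₂ ann₁ ann₂ prot₁ prot₂ M₁ M₂ h₁ h₂ u v huv
    hsameL hsameAnn hsameProt
end

section
/- Incremental maintenance correctness (insertion): in a calibrated junction tree over a commutative semiring, if a base relation R mapped to bag b is updated to R + ΔR (pointwise semiring addition of annotations), then propagating delta messages Δ(u→v) from b outward—where each delta message is computed by the same message formula applied with the updated relations minus the old message, using distributivity—recalibrates the tree: the resulting messages equal those obtained by full recalibration from scratch. -/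
open Finset

variable {Att : Type*} [Fintype Att] [DecidableEq Att]
variable {Val : Att → Type*} [∀ a, Fintype (Val a)] [∀ a, DecidableEq (Val a)]
variable {D : Type*} [CommSemiring D]

variable {V : Type*} [Fintype V] [DecidableEq V]

set_option linter.unusedSectionVars false
section TreeHelpers
variable {V : Type*} [DecidableEq V]

lemma walk_isPath_concat {G : SimpleGraph V} {u v w : V} {p : G.Walk u v} (hp : p.IsPath)
    (h : G.Adj v w) (hw : w ∉ p.support) : (p.concat h).IsPath := by
  rw [← SimpleGraph.Walk.reverse_reverse (p.concat h), SimpleGraph.Walk.reverse_concat]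
  exact (hp.reverse.cons (by simpa [SimpleGraph.Walk.support_reverse] using hw)).reverse

lemma subtree_step {G : SimpleGraph V} (hG : G.IsTree) {u v w b : V}
    (huv : G.Adj u v) (hwu : G.Adj w u) (hwv : w ≠ v)
    (h : InSubtree G w u b) : InSubtree G u v b := by
  obtain ⟨p0, hp0⟩ := h
  have hu : u ∉ p0.toPath.val.support :=
    fun hc => hp0 (SimpleGraph.Walk.support_toPath_subset p0 hc)
  set p := p0.toPath.val with hp
  have hpath : p.IsPath := p0.toPath.property
  refine ⟨p.concat hwu, fun hv => ?_⟩
  rw [SimpleGraph.Walk.support_concat] at hv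
  have hvu : v ≠ u := huv.ne'
  have hvp : v ∈ p.support := by
    simp only [List.concat_eq_append, List.mem_append, List.mem_singleton] at hv
    rcases hv with h' | h'
    · exact h'
    · exact absurd h' hvu
  -- build two distinct paths from v to u
  have hr : (p.dropUntil v hvp).IsPath := hpath.dropUntil hvp
  have hur : u ∉ (p.dropUntil v hvp).support :=
    fun hc => hu (SimpleGraph.Walk.support_dropUntil_subset p hvp hc)
  have hr' : ((p.dropUntil v hvp).concat hwu).IsPath := walk_isPath_concat hr hwu hur
  have hs : (SimpleGraph.Walk.cons huv.symm SimpleGraph.Walk.nil : G.Walk v u).IsPath := by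
    simp [SimpleGraph.Walk.cons_isPath_iff, hvu]
  have := (hG.existsUnique_path v u).unique hr' hs
  have hlen := congrArg SimpleGraph.Walk.length this
  rw [SimpleGraph.Walk.length_concat] at hlen
  simp [SimpleGraph.Walk.length_cons] at hlen
  exact hwv hlen.eq.symm

lemma subtree_parent {G : SimpleGraph V} (hG : G.IsTree) {u v b : V}
    (huv : G.Adj u v) (hub : u ≠ b) (h : InSubtree G u v b) :
    ∃ w, G.Adj w u ∧ w ≠ v ∧ InSubtree G w u b ∧
      ∀ x, G.Adj x u → x ≠ v → x ≠ w → ¬ InSubtree G x u b := by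
  obtain ⟨p0, hp0⟩ := h
  have hv : v ∉ p0.toPath.val.support :=
    fun hc => hp0 (SimpleGraph.Walk.support_toPath_subset p0 hc)
  set p := p0.toPath.val with hp
  have hpath : p.IsPath := p0.toPath.property
  obtain ⟨w, h', q, hq⟩ := SimpleGraph.Walk.exists_eq_cons_of_ne hub p.reverse
  have hqp : (SimpleGraph.Walk.cons h' q).IsPath := hq ▸ hpath.reverse
  rw [SimpleGraph.Walk.cons_isPath_iff] at hqp
  have hwp : w ∈ p.support := by
    have : w ∈ p.reverse.support := by
      rw [hq]; simp [SimpleGraph.Walk.support_cons]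
    simpa [SimpleGraph.Walk.support_reverse] using this
  have hwv : w ≠ v := fun hc => hv (hc ▸ hwp)
  refine ⟨w, h'.symm, hwv, ⟨q.reverse, by
    simpa [SimpleGraph.Walk.support_reverse] using hqp.2⟩, ?_⟩
  rintro x hxu hxv hxw ⟨r0, hr0⟩
  have hur : u ∉ r0.toPath.val.support :=
    fun hc => hr0 (SimpleGraph.Walk.support_toPath_subset r0 hc)
  set r := r0.toPath.val with hr
  have hrpath : r.IsPath := r0.toPath.property
  have hr' : (r.concat hxu).IsPath := walk_isPath_concat hrpath hxu hur
  have hequ : r.concat hxu = p := (hG.existsUnique_path b u).unique hr' hpath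
  have hrev : SimpleGraph.Walk.cons hxu.symm r.reverse = SimpleGraph.Walk.cons h' q := by
    rw [← SimpleGraph.Walk.reverse_concat r hxu, hequ, hq]
  have hsup := congrArg SimpleGraph.Walk.support hrev
  simp only [SimpleGraph.Walk.support_cons] at hsup
  have := List.cons.injEq u r.reverse.support u q.support ▸ hsup
  have htail : r.reverse.support = q.support := (List.cons_injective.eq_iff.mp hsup)
  have hx : r.reverse.support = x :: r.reverse.support.tail :=
    SimpleGraph.Walk.support_eq_cons _
  have hw2 : q.support = w :: q.support.tail := SimpleGraph.Walk.support_eq_cons _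
  apply hxw
  have := hx ▸ htail
  rw [hw2] at this
  exact (List.cons.injEq _ _ _ _ ▸ this).1

end TreeHelpers

lemma margOver_add (E : Finset Att) (R S : (∀ a, Val a) → D) :
    margOver E (fun t => R t + S t) = fun t => margOver E R t + margOver E S t := by
  classical
  funext t
  simp only [margOver]
  rw [← Finset.sum_add_distrib]
  refine Finset.sum_congr rfl fun s _ => ?_
  split <;> simp

open scoped Classical in
/-- Incremental maintenance correctness (insertion): in a calibrated junction
tree, if the base relation at bag `b` is updated from `L b` to `L b + ΔR`, then
propagating delta messages `Δ(u → v)` from `b` outward -- where each delta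
message is obtained from the message formula, by distributivity, with the delta
of the (unique) incoming factor in place of the old one -- recalibrates the
tree: adding the delta messages to the stored messages along edges directed
away from `b` yields exactly a message system for the updated relations, i.e.
the messages obtained by full recalibration from scratch. -/
theorem ivm_insertion_correct (G : SimpleGraph V) [DecidableRel G.Adj]
    (hG : G.IsTree) (bag : V → Finset Att)
    (L : V → (∀ a, Val a) → D)
    (M : V → V → (∀ a, Val a) → D) (hM : MsgSystem G bag L M)
    (b : V) (ΔR : (∀ a, Val a) → D)
    (Δ : V → V → (∀ a, Val a) → D)
    (hΔb : ∀ v, G.Adj b v →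
      Δ b v = margOver (bag b \ bag v)
        (fun t => ΔR t * ∏ w ∈ (G.neighborFinset b).erase v, M w b t))
    (hΔ : ∀ u v, G.Adj u v → u ≠ b → InSubtree G u v b →
      ∀ w, G.Adj w u → InSubtree G w u b →
        Δ u v = margOver (bag u \ bag v)
          (fun t => L u t * Δ w u t *
            ∏ x ∈ ((G.neighborFinset u).erase v).erase w, M x u t)) :
    MsgSystem G bag (Function.update L b (fun t => L b t + ΔR t))
      (fun u v => if InSubtree G u v b then (fun t => M u v t + Δ u v t)
        else M u v) := by
  intro u v huv
  have hvu : v ≠ u := huv.ne'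
  by_cases hcase : InSubtree G u v b
  · by_cases hub : u = b
    · subst hub
      simp only [if_pos hcase]
      have hnb : ∀ w : V, ¬ InSubtree G w u u := by
        rintro w ⟨p, hp⟩; exact hp p.start_mem_support
      have hprod : ∀ t, (∏ w ∈ (G.neighborFinset u).erase v,
          (if InSubtree G w u u then (fun t => M w u t + Δ w u t) else M w u) t)
          = ∏ w ∈ (G.neighborFinset u).erase v, M w u t := by
        intro t
        refine Finset.prod_congr rfl fun w _ => ?_
        rw [if_neg (hnb w)]
      have key : (fun t => Function.update L u (fun t => L u t + ΔR t) u t *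
            ∏ w ∈ (G.neighborFinset u).erase v,
              (if InSubtree G w u u then (fun t => M w u t + Δ w u t) else M w u) t)
          = fun t => (L u t * ∏ w ∈ (G.neighborFinset u).erase v, M w u t)
              + (ΔR t * ∏ w ∈ (G.neighborFinset u).erase v, M w u t) := by
        funext t
        rw [Function.update_self, hprod t]
        ring
      rw [key, margOver_add (bag u \ bag v)
          (fun t => L u t * ∏ w ∈ (G.neighborFinset u).erase v, M w u t)
          (fun t => ΔR t * ∏ w ∈ (G.neighborFinset u).erase v, M w u t),
        ← hM u v huv, ← hΔb v huv]
    · simp only [if_pos hcase]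
      obtain ⟨w₀, hw₀u, hw₀v, hw₀in, huniq⟩ := subtree_parent hG huv hub hcase
      have hmem : w₀ ∈ (G.neighborFinset u).erase v := by
        rw [Finset.mem_erase, SimpleGraph.mem_neighborFinset]
        exact ⟨hw₀v, hw₀u.symm⟩
      have key : (fun t => Function.update L b (fun t => L b t + ΔR t) u t *
            ∏ w ∈ (G.neighborFinset u).erase v,
              (if InSubtree G w u b then (fun t => M w u t + Δ w u t) else M w u) t)
          = fun t => (L u t * ∏ w ∈ (G.neighborFinset u).erase v, M w u t)
              + (L u t * Δ w₀ u t *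
                  ∏ x ∈ ((G.neighborFinset u).erase v).erase w₀, M x u t) := by
        funext t
        rw [Function.update_of_ne hub]
        rw [← Finset.mul_prod_erase _ _ hmem, if_pos hw₀in]
        have hrest : ∏ x ∈ ((G.neighborFinset u).erase v).erase w₀,
            (if InSubtree G x u b then (fun t => M x u t + Δ x u t) else M x u) t
            = ∏ x ∈ ((G.neighborFinset u).erase v).erase w₀, M x u t := by
          refine Finset.prod_congr rfl fun x hx => ?_
          rcases Finset.mem_erase.mp hx with ⟨hxw, hx2⟩
          rcases Finset.mem_erase.mp hx2 with ⟨hxv, hxN⟩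
          rw [if_neg (huniq x ((SimpleGraph.mem_neighborFinset _ _ _).mp hxN).symm hxv hxw)]
        rw [hrest, ← Finset.mul_prod_erase _ (fun x => M x u t) hmem]
        ring
      rw [key, margOver_add (bag u \ bag v)
          (fun t => L u t * ∏ w ∈ (G.neighborFinset u).erase v, M w u t)
          (fun t => L u t * Δ w₀ u t *
            ∏ x ∈ ((G.neighborFinset u).erase v).erase w₀, M x u t),
        ← hM u v huv, ← hΔ u v huv hub hcase w₀ hw₀u hw₀in]
  · simp only [if_neg hcase]
    have hub : u ≠ b := by
      rintro rfl
      exact hcase ⟨SimpleGraph.Walk.nil, by simpa using hvu⟩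
    have key : (fun t => Function.update L b (fun t => L b t + ΔR t) u t *
          ∏ w ∈ (G.neighborFinset u).erase v,
            (if InSubtree G w u b then (fun t => M w u t + Δ w u t) else M w u) t)
        = fun t => L u t * ∏ w ∈ (G.neighborFinset u).erase v, M w u t := by
      funext t
      rw [Function.update_of_ne hub]
      congr 1
      refine Finset.prod_congr rfl fun w hw => ?_
      rcases Finset.mem_erase.mp hw with ⟨hwv, hwN⟩
      rw [if_neg fun h => hcase
        (subtree_step hG huv ((SimpleGraph.mem_neighborFinset _ _ _).mp hwN).symm hwv h)]
    rw [key]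
    exact hM u v huv
end

section
/- For an acyclic join graph, taking the junction tree with one bag per relation, the absorption result at each bag after calibration has support bounded by the size of the corresponding base relation; hence calibration of an acyclic join of r relations of size at most n produces at most 2(r−1) messages each of support at most n. -/
/-! Absorption at `v` and every message out of `u` are built from a join of the local relation
(`L v`, resp. `L u`) with further factors, and a join can only shrink the support. A message
then sums out `bag u \ bag v`, and each tuple in its support agrees on `bag u ∩ bag v` with a
tuple in the support of `L u`, so its projected support is at most that of `L u` on `bag u`.
A tree on `r` bags has `r - 1` edges, each carrying one message in each direction. -/

open Finset

variable {Att : Type*} [Fintype Att] [DecidableEq Att]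
variable {Val : Att → Type*} [∀ a, Fintype (Val a)] [∀ a, DecidableEq (Val a)]
variable {D : Type*} [CommSemiring D]

variable {V : Type*} [Fintype V] [DecidableEq V]

/-- Number of distinct tuples, projected onto schema `S`, on which `R` is
nonzero (the size of the support of `R` as a relation over `S`). -/
def suppCard [DecidableEq D] (R : (∀ a, Val a) → D) (S : Finset Att) : ℕ :=
  ((Finset.univ.filter (fun t : ∀ a, Val a => R t ≠ 0)).image
      (fun t => fun a : {a // a ∈ S} => t a.1)).card

theorem exists_ne_zero_of_margOver_ne_zero {E : Finset Att} {R : (∀ a, Val a) → D}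
    {t : ∀ a, Val a} (ht : margOver E R t ≠ 0) : ∃ s, R s ≠ 0 ∧ ∀ a, a ∉ E → s a = t a := by
  obtain ⟨s, -, hs⟩ := exists_ne_zero_of_sum_ne_zero ht
  by_cases hst : ∀ a, a ∉ E → s a = t a
  · rw [if_pos hst] at hs
    exact ⟨s, hs, hst⟩
  · simp [hst] at hs

section Support

variable [DecidableEq D]

theorem suppCard_mono {R T : (∀ a, Val a) → D} (h : Function.support R ⊆ Function.support T)
    (S : Finset Att) : suppCard R S ≤ suppCard T S :=
  card_le_card <| image_subset_image fun t ht => by simpa using h (by simpa using ht)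

theorem suppCard_joinRel_le_left (R T : (∀ a, Val a) → D) (S : Finset Att) :
    suppCard (joinRel R T) S ≤ suppCard R S :=
  suppCard_mono (Function.support_mul_subset_left R T) S

theorem suppCard_le_of_subset (R : (∀ a, Val a) → D) {S T : Finset Att} (hST : S ⊆ T) :
    suppCard R S ≤ suppCard R T := by
  unfold suppCard
  calc _ = (((univ.filter fun t : ∀ a, Val a => R t ≠ 0).image
            fun t => fun a : {a // a ∈ T} => t a.1).image
            fun f => fun a : {a // a ∈ S} => f ⟨a.1, hST a.2⟩).card := by
        rw [image_image]; rfl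
    _ ≤ _ := card_image_le

theorem suppCard_margOver_le {E S : Finset Att} (hSE : Disjoint S E) (R : (∀ a, Val a) → D) :
    suppCard (margOver E R) S ≤ suppCard R S := by
  refine card_le_card fun x hx => ?_
  simp only [mem_image, mem_filter, mem_univ, true_and] at hx ⊢
  obtain ⟨t, ht, rfl⟩ := hx
  obtain ⟨s, hs, hst⟩ := exists_ne_zero_of_margOver_ne_zero ht
  exact ⟨s, hs, funext fun a => hst a.1 (disjoint_left.mp hSE a.2)⟩

variable {G : SimpleGraph V} [DecidableRel G.Adj] {L : V → (∀ a, Val a) → D}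
  {M : V → V → (∀ a, Val a) → D}

omit [DecidableEq V] in
theorem suppCard_absorb_le (v : V) (S : Finset Att) :
    suppCard (absorb G L M v) S ≤ suppCard (L v) S :=
  suppCard_joinRel_le_left _ _ S

theorem MsgSystem.suppCard_le {bag : V → Finset Att} (hM : MsgSystem G bag L M) {u v : V}
    (huv : G.Adj u v) : suppCard (M u v) (bag u ∩ bag v) ≤ suppCard (L u) (bag u) := by
  rw [hM u v huv]
  calc _ ≤ suppCard (joinRel (L u) fun t => ∏ w ∈ (G.neighborFinset u).erase v, M w u t)
          (bag u ∩ bag v) :=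
        suppCard_margOver_le (disjoint_sdiff_self_right.mono_left inter_subset_right) _
    _ ≤ suppCard (joinRel (L u) _) (bag u) := suppCard_le_of_subset _ inter_subset_left
    _ ≤ _ := suppCard_joinRel_le_left _ _ _

end Support

namespace SimpleGraph

omit [DecidableEq V] in
theorem card_filter_adj_eq_two_mul_card_edgeFinset (G : SimpleGraph V) [DecidableRel G.Adj] :
    #(univ.filter fun p : V × V => G.Adj p.1 p.2) = 2 * #G.edgeFinset := by
  rw [← dart_card_eq_twice_card_edges, ← Fintype.card_subtype]
  exact Fintype.card_congr ⟨fun p => ⟨p.1, p.2⟩, fun d => ⟨d.toProd, d.adj⟩, fun _ => rfl,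
    fun _ => rfl⟩

omit [DecidableEq V] in
theorem IsTree.card_filter_adj {G : SimpleGraph V} [DecidableRel G.Adj] (hG : G.IsTree) :
    #(univ.filter fun p : V × V => G.Adj p.1 p.2) = 2 * (Fintype.card V - 1) := by
  rw [G.card_filter_adj_eq_two_mul_card_edgeFinset, ← hG.card_edgeFinset, Nat.add_sub_cancel]

end SimpleGraph

theorem acyclic_calibration_support_general [DecidableEq D]
    (G : SimpleGraph V) [DecidableRel G.Adj]
    (hG : G.IsTree) (bag : V → Finset Att)
    (L : V → (∀ a, Val a) → D)
    (M : V → V → (∀ a, Val a) → D) (hM : MsgSystem G bag L M)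
    (n : ℕ) (hn : ∀ v, suppCard (L v) (bag v) ≤ n) :
    (∀ v, suppCard (absorb G L M v) (bag v) ≤ suppCard (L v) (bag v)) ∧
      (∀ u v, G.Adj u v → suppCard (M u v) (bag u ∩ bag v) ≤ n) ∧
      (Finset.univ.filter (fun p : V × V => G.Adj p.1 p.2)).card =
        2 * (Fintype.card V - 1) :=
  ⟨fun v => suppCard_absorb_le v (bag v),
    fun u _ huv => (hM.suppCard_le huv).trans (hn u),
    hG.card_filter_adj⟩

/-- For an acyclic join graph, with the junction tree having one bag per
relation (each local relation of support at most `n`), the absorption at each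
bag after calibration has support bounded by the support of its base relation,
every one of the messages has support at most `n`, and calibration of a tree of
`r` bags produces exactly `2 (r - 1)` (directed) messages. -/
theorem acyclic_calibration_support [DecidableEq D]
    (G : SimpleGraph V) [DecidableRel G.Adj]
    (hG : G.IsTree) (bag : V → Finset Att)
    (hRI : RunningIntersection G bag)
    (L : V → (∀ a, Val a) → D)
    (hL : ∀ v, DependsOnlyOn (L v) (bag v))
    (M : V → V → (∀ a, Val a) → D) (hM : MsgSystem G bag L M)
    (n : ℕ) (hn : ∀ v, suppCard (L v) (bag v) ≤ n) :
    (∀ v, suppCard (absorb G L M v) (bag v) ≤ suppCard (L v) (bag v)) ∧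
      (∀ u v, G.Adj u v → suppCard (M u v) (bag u ∩ bag v) ≤ n) ∧
      (Finset.univ.filter (fun p : V × V => G.Adj p.1 p.2)).card =
        2 * (Fintype.card V - 1) :=
  acyclic_calibration_support_general G hG bag L M hM n hn
end
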